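/- arXiv:1001.2835 — 6 statements merged into one kernel-verified Lean document; each statement's English description precedes it below -/
import Mathlib

section
/- For all positive integers n, ∑_{k=1}^{n} C(n,k) (-1)^k / k^2 = -(1/2)(H_n^{(2)} + (H_n)^2), where H_n^{(m)} = ∑_{k=1}^n 1/k^m. -/
/-!
Write `S_m(n) = ∑_{k=1}^n C(n,k) (-1)^k / k^m`. Pascal's rule together with
`k C(n+1,k) = (n+1) C(n,k-1)` gives `S_{m+1}(n+1) = S_{m+1}(n) + S_m(n+1) / (n+1)`.
Since `S_0(n+1) = -1`, induction on `n` gives `S_1(n) = -H_n`, and then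
`S_2(n) = -(H_n^{(2)} + H_n^2) / 2`, whose increment is exactly `-H_{n+1} / (n+1)`.
-/

/-- The generalized harmonic number `H_n^{(m)} = ∑_{k=1}^n 1/k^m` as a real number. -/
noncomputable def genHarmonic (m n : ℕ) : ℝ := ∑ k ∈ Finset.range n, (1 : ℝ) / ((k + 1 : ℝ)) ^ m

open Finset

noncomputable def altChooseSum (m n : ℕ) : ℝ :=
  ∑ k ∈ Icc 1 n, (n.choose k : ℝ) * (-1) ^ k / (k : ℝ) ^ m

lemma genHarmonic_succ (m n : ℕ) :
    genHarmonic m (n + 1) = genHarmonic m n + 1 / ((n : ℝ) + 1) ^ m :=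
  sum_range_succ _ n

lemma altChooseSum_zero_right (m : ℕ) : altChooseSum m 0 = 0 := by
  simp [altChooseSum]

lemma altChooseSum_zero_succ (n : ℕ) : altChooseSum 0 (n + 1) = -1 := by
  have h : ∑ k ∈ range (n + 2), (-1 : ℝ) ^ k * ((n + 1).choose k : ℝ) = 0 := by
    exact_mod_cast Int.alternating_sum_range_choose_of_ne n.succ_ne_zero
  rw [Nat.range_succ_eq_Icc_zero, ← insert_Icc_add_one_left_eq_Icc (Nat.zero_le _),
    sum_insert (by simp)] at h
  simp only [pow_zero, Nat.choose_zero_right, Nat.cast_one, mul_one, zero_add] at h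
  have hsum : altChooseSum 0 (n + 1) =
      ∑ k ∈ Icc 1 (n + 1), (-1 : ℝ) ^ k * ((n + 1).choose k : ℝ) :=
    sum_congr rfl fun k _ => by rw [pow_zero, div_one, mul_comm]
  linear_combination hsum + h

lemma altChooseSum_succ_term (m n k : ℕ) (hk : 1 ≤ k) :
    ((n + 1).choose k : ℝ) * (-1) ^ k / (k : ℝ) ^ (m + 1) =
      (n.choose k : ℝ) * (-1) ^ k / (k : ℝ) ^ (m + 1) +
        ((n + 1).choose k : ℝ) * (-1) ^ k / (k : ℝ) ^ m / ((n : ℝ) + 1) := by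
  obtain ⟨j, rfl⟩ := Nat.exists_eq_add_of_le' hk
  have hpascal : ((n + 1).choose (j + 1) : ℝ) = n.choose j + n.choose (j + 1) := by
    exact_mod_cast Nat.choose_succ_succ n j
  have habsorb : ((n : ℝ) + 1) * n.choose j = (n + 1).choose (j + 1) * ((j : ℝ) + 1) := by
    exact_mod_cast Nat.add_one_mul_choose_eq n j
  push_cast
  field_simp
  linear_combination ((j : ℝ) + 1) ^ m * (((n : ℝ) + 1) * hpascal + habsorb)

lemma altChooseSum_succ (m n : ℕ) :
    altChooseSum (m + 1) (n + 1) =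
      altChooseSum (m + 1) n + altChooseSum m (n + 1) / ((n : ℝ) + 1) := by
  have htop : ∑ k ∈ Icc 1 (n + 1), (n.choose k : ℝ) * (-1) ^ k / (k : ℝ) ^ (m + 1) =
      altChooseSum (m + 1) n := by
    rw [sum_Icc_succ_top (by omega), Nat.choose_succ_self, Nat.cast_zero, zero_mul, zero_div,
      add_zero, altChooseSum]
  rw [altChooseSum, sum_congr rfl fun k hk => altChooseSum_succ_term m n k (mem_Icc.1 hk).1,
    sum_add_distrib, htop, ← sum_div, altChooseSum, altChooseSum]

lemma altChooseSum_one (n : ℕ) : altChooseSum 1 n = -genHarmonic 1 n := by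
  induction n with
  | zero => simp [altChooseSum_zero_right, genHarmonic]
  | succ n ih =>
    rw [altChooseSum_succ, ih, altChooseSum_zero_succ, genHarmonic_succ]
    ring

lemma altChooseSum_two (n : ℕ) :
    altChooseSum 2 n = -(1 / 2) * (genHarmonic 2 n + genHarmonic 1 n ^ 2) := by
  induction n with
  | zero => simp [altChooseSum_zero_right, genHarmonic]
  | succ n ih =>
    rw [altChooseSum_succ, ih, altChooseSum_one, genHarmonic_succ, genHarmonic_succ]
    field_simp
    ring

theorem alternating_binomial_sum_sq_general (n : ℕ) :
    ∑ k ∈ Finset.Icc 1 n, (n.choose k : ℝ) * (-1) ^ k / (k : ℝ) ^ 2 =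
      -(1 / 2) * (genHarmonic 2 n + (genHarmonic 1 n) ^ 2) :=
  altChooseSum_two n

theorem alternating_binomial_sum_sq (n : ℕ) (hn : 0 < n) :
    ∑ k ∈ Finset.Icc 1 n, (n.choose k : ℝ) * (-1) ^ k / (k : ℝ) ^ 2 =
      -(1 / 2) * (genHarmonic 2 n + (genHarmonic 1 n) ^ 2) :=
  alternating_binomial_sum_sq_general n
end

section
/- For all nonnegative integers n and all positive real x, ∑_{k=0}^n C(n,k) (-1)^k / (k+x)^2 = (n! Γ(x)/Γ(n+1+x)) · ∑_{j=0}^{n} 1/(j+x). -/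
/-!
Writing `S_n(x)` for the left-hand side, Pascal's rule gives `S_{n+1}(x) = S_n(x) - S_n(x + 1)`,
so the identity `S_n(x) = n! / (x)_{n+1} · ∑_{j ≤ n} 1/(j + x)` with the rising factorial
`(x)_{n+1} = x (x + 1) ⋯ (x + n)` follows by induction on `n`, for all admissible `x` at
once. Finally `Γ(x + n + 1) = (x)_{n+1} Γ(x)` turns the rising factorial into the quotient of
Gamma values.
-/

open Finset Polynomial

theorem sum_range_succ_choose_mul_neg_one_pow_mul {R : Type*} [CommRing R] (f : ℕ → R)
    (n : ℕ) :
    ∑ k ∈ range (n + 2), ((n + 1).choose k : R) * (-1) ^ k * f k =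
      ∑ k ∈ range (n + 1), (n.choose k : R) * (-1) ^ k * (f k - f (k + 1)) := by
  have hchoose_top : ∑ k ∈ range (n + 2), (n.choose k : R) * (-1) ^ k * f k =
      ∑ k ∈ range (n + 1), (n.choose k : R) * (-1) ^ k * f k := by
    simp [sum_range_succ _ (n + 1)]
  rw [sum_range_succ']
  simp only [mul_sub, sum_sub_distrib, ← hchoose_top, sum_range_succ' _ (n + 1),
    Nat.choose_succ_succ', Nat.cast_add, add_mul, sum_add_distrib, pow_succ]
  simp
  ring

theorem Real.Gamma_add_nat_eq_ascPochhammer_mul {x : ℝ} (hx : ∀ k : ℕ, x ≠ -k) (n : ℕ) :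
    Real.Gamma (x + n) = (ascPochhammer ℝ n).eval x * Real.Gamma x := by
  induction n with
  | zero => simp
  | succ n ih =>
    have hxn : x + n ≠ 0 := fun h => hx n (by linarith)
    rw [Nat.cast_succ, ← add_assoc, Real.Gamma_add_one hxn, ih, ascPochhammer_succ_eval]
    ring

theorem ascPochhammer_succ_eval_eq_mul_eval_add_one {S : Type*} [CommSemiring S] (n : ℕ) (x : S) :
    (ascPochhammer S (n + 1)).eval x = x * (ascPochhammer S n).eval (x + 1) := by
  simp [ascPochhammer_succ_left, eval_comp]

section Field

variable {K : Type*} [Field K]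

theorem sum_range_succ_choose_mul_neg_one_pow_div_sq (n : ℕ) (x : K) :
    ∑ k ∈ range (n + 2), ((n + 1).choose k : K) * (-1) ^ k / ((k : K) + x) ^ 2 =
      ∑ k ∈ range (n + 1), (n.choose k : K) * (-1) ^ k / ((k : K) + x) ^ 2 -
        ∑ k ∈ range (n + 1), (n.choose k : K) * (-1) ^ k / ((k : K) + (x + 1)) ^ 2 := by
  have := sum_range_succ_choose_mul_neg_one_pow_mul (fun k : ℕ => 1 / ((k : K) + x) ^ 2) n
  simp only [mul_one_div, mul_sub, sum_sub_distrib] at this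
  rw [this]
  congr 1
  refine sum_congr rfl fun k _ => ?_
  push_cast
  ring

theorem sum_range_one_div_add_add_one (n : ℕ) (x : K) :
    ∑ j ∈ range (n + 1), 1 / ((j : K) + (x + 1)) =
      ∑ j ∈ range (n + 2), 1 / ((j : K) + x) - 1 / x := by
  rw [sum_range_succ' _ (n + 1)]
  simp only [Nat.cast_add, Nat.cast_one, Nat.cast_zero, zero_add, add_sub_cancel_right]
  exact sum_congr rfl fun j _ => by ring_nf

theorem sum_range_choose_mul_neg_one_pow_div_sq (n : ℕ) {x : K}
    (hx : (ascPochhammer K (n + 1)).eval x ≠ 0) :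
    ∑ k ∈ range (n + 1), (n.choose k : K) * (-1) ^ k / ((k : K) + x) ^ 2 =
      n.factorial / (ascPochhammer K (n + 1)).eval x *
        ∑ j ∈ range (n + 1), 1 / ((j : K) + x) := by
  induction n generalizing x with
  | zero => simp [sq]
  | succ n ih =>
    have hP_right : (ascPochhammer K (n + 2)).eval x =
        (ascPochhammer K (n + 1)).eval x * (x + (n + 1 : ℕ)) :=
      ascPochhammer_succ_eval _ _
    have hP_left : (ascPochhammer K (n + 2)).eval x =
        x * (ascPochhammer K (n + 1)).eval (x + 1) :=
      ascPochhammer_succ_eval_eq_mul_eval_add_one _ _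
    obtain ⟨ha, hxn⟩ := mul_ne_zero_iff.mp (hP_right ▸ hx)
    obtain ⟨hx0, hb⟩ := mul_ne_zero_iff.mp (hP_left ▸ hx)
    have hb_eq : (ascPochhammer K (n + 1)).eval (x + 1) =
        (ascPochhammer K (n + 1)).eval x * (x + (n + 1 : ℕ)) / x := by
      rw [eq_div_iff hx0, mul_comm, ← hP_left, hP_right]
    -- With `P = (x)_{n+2}` and `H = ∑_{j ≤ n+1} 1/(j + x)` the two instances of `ih` give
    -- `n!/P · ((x + n + 1)(H - 1/(x + n + 1)) - x (H - 1/x)) = (n + 1)!/P · H`.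
    have hH_right := sum_range_succ (fun j : ℕ => 1 / ((j : K) + x)) (n + 1)
    rw [sum_range_succ_choose_mul_neg_one_pow_div_sq, ih ha, ih hb, sum_range_one_div_add_add_one,
      eq_sub_of_add_eq hH_right.symm, hb_eq, hP_right, Nat.factorial_succ, Nat.cast_mul]
    generalize ∑ j ∈ range (n + 1 + 1), 1 / ((j : K) + x) = H
    generalize ((n + 1 : ℕ) : K) = c at hxn ⊢
    have hcx : c + x ≠ 0 := by rwa [add_comm]
    field_simp
    ring

end Field

theorem coppo_formula_one (n : ℕ) (x : ℝ) (hx : 0 < x) :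
    ∑ k ∈ Finset.range (n + 1), (n.choose k : ℝ) * (-1) ^ k / ((k : ℝ) + x) ^ 2 =
      (n.factorial : ℝ) * Real.Gamma x / Real.Gamma ((n : ℝ) + 1 + x) *
        ∑ j ∈ Finset.range (n + 1), 1 / ((j : ℝ) + x) := by
  have hP : (ascPochhammer ℝ (n + 1)).eval x ≠ 0 := (ascPochhammer_pos _ x hx).ne'
  have hΓ : Real.Gamma x ≠ 0 := (Real.Gamma_pos_of_pos hx).ne'
  have hx_ne : ∀ k : ℕ, x ≠ -k := fun k h => by linarith [k.cast_nonneg (α := ℝ)]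
  rw [show (n : ℝ) + 1 + x = x + (n + 1 : ℕ) by push_cast; ring,
    Real.Gamma_add_nat_eq_ascPochhammer_mul hx_ne, sum_range_choose_mul_neg_one_pow_div_sq n hP]
  field_simp
end

section
/- For all nonnegative integers n and all positive real x, ∑_{k=0}^n C(n,k) (-1)^k / (k+x)^3 = (n! Γ(x)/Γ(n+1+x)) · (1/2)·((∑_{j=0}^n 1/(j+x))^2 + ∑_{j=0}^n 1/(j+x)^2). -/
/-!
Both sides satisfy `S (n + 1) x = S n x - S n (x + 1)`: on the left this is Pascal's rule, on the
right it follows from `Γ (s + 1) = s Γ s` together with how the two harmonic-type sums change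
when a term is added at either end. At `n = 0` both sides equal `1 / x ^ 3`.
-/

open Finset Nat

theorem sum_range_choose_succ_mul_neg_one_pow {R : Type*} [CommRing R] (f : ℝ → R)
    (n : ℕ) (x : ℝ) :
    ∑ k ∈ range (n + 2), ((n + 1).choose k : R) * (-1) ^ k * f (k + x) =
      ∑ k ∈ range (n + 1), (n.choose k : R) * (-1) ^ k * f (k + x) -
        ∑ k ∈ range (n + 1), (n.choose k : R) * (-1) ^ k * f (k + (x + 1)) := by
  have pascal := sum_choose_succ_mul (fun k _ => (-1 : R) ^ k * f (k + x)) n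
  simp only [mul_assoc] at pascal ⊢
  rw [pascal, sub_eq_add_neg, ← sum_neg_distrib]
  congr 1
  refine sum_congr rfl fun k _ => ?_
  rw [pow_succ, Nat.cast_succ, add_assoc, add_comm 1 x]
  ring

theorem sum_range_succ_natCast_add' {M : Type*} [AddCommMonoid M] (f : ℝ → M) (n : ℕ)
    (x : ℝ) :
    ∑ j ∈ range (n + 1), f (j + x) = ∑ j ∈ range n, f (j + (x + 1)) + f x := by
  rw [sum_range_succ']
  simp [add_assoc, add_comm 1 x]

/-- `B(x, n + 1)`, Euler's beta function at a positive integer second argument. -/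
noncomputable def betaSucc (n : ℕ) (x : ℝ) : ℝ := n ! * Real.Gamma x / Real.Gamma (n + 1 + x)

theorem betaSucc_zero {x : ℝ} (hx : ∀ m : ℕ, x ≠ -m) : betaSucc 0 x = x⁻¹ := by
  have hx0 : x ≠ 0 := by simpa using hx 0
  rw [betaSucc, factorial_zero, Nat.cast_one, Nat.cast_zero, zero_add, add_comm,
    Real.Gamma_add_one hx0]
  field_simp [Real.Gamma_ne_zero hx]

theorem betaSucc_succ {n : ℕ} {x : ℝ} (h : (n : ℝ) + 1 + x ≠ 0) :
    betaSucc (n + 1) x = betaSucc n x * ((n + 1) / (n + 1 + x)) := by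
  rw [betaSucc, betaSucc, factorial_succ, Nat.cast_succ,
    (by ring : (n : ℝ) + 1 + 1 + x = n + 1 + x + 1), Real.Gamma_add_one h]
  push_cast
  field_simp

theorem betaSucc_add_one {n : ℕ} {x : ℝ} (hx : x ≠ 0) (h : (n : ℝ) + 1 + x ≠ 0) :
    betaSucc n (x + 1) = betaSucc n x * (x / (n + 1 + x)) := by
  rw [betaSucc, betaSucc, (by ring : (n : ℝ) + 1 + (x + 1) = n + 1 + x + 1),
    Real.Gamma_add_one h, Real.Gamma_add_one hx]
  field_simp

theorem sum_choose_mul_neg_one_pow_div_add_pow_three (n : ℕ) {x : ℝ}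
    (hx : ∀ m : ℕ, x ≠ -m) :
    ∑ k ∈ range (n + 1), (n.choose k : ℝ) * (-1) ^ k / ((k : ℝ) + x) ^ 3 =
      betaSucc n x * (1 / 2) *
        ((∑ j ∈ range (n + 1), 1 / ((j : ℝ) + x)) ^ 2 +
          ∑ j ∈ range (n + 1), 1 / ((j : ℝ) + x) ^ 2) := by
  simp only [div_eq_mul_one_div ((_ : ℝ) * _)]
  induction n generalizing x with
  | zero =>
    have hx0 : x ≠ 0 := by simpa using hx 0
    simp only [zero_add, range_one, sum_singleton, choose_self, Nat.cast_zero, Nat.cast_one,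
      pow_zero, betaSucc_zero hx]
    field_simp
    ring
  | succ n ih =>
    have hx0 : x ≠ 0 := by simpa using hx 0
    have hc : (n : ℝ) + 1 + x ≠ 0 := fun h => hx (n + 1) (by push_cast; linarith)
    have hx1 : ∀ m : ℕ, x + 1 ≠ -m := fun m h => hx (m + 1) (by push_cast; linarith)
    have drop_last : ∑ j ∈ range (n + 1), 1 / ((j : ℝ) + x) =
        ∑ j ∈ range (n + 1 + 1), 1 / ((j : ℝ) + x) - 1 / (n + 1 + x) := by
      rw [sum_range_succ _ (n + 1)]; push_cast; ring
    have drop_first : ∑ j ∈ range (n + 1), 1 / ((j : ℝ) + (x + 1)) =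
        ∑ j ∈ range (n + 1 + 1), 1 / ((j : ℝ) + x) - 1 / x := by
      rw [sum_range_succ_natCast_add' (fun y => 1 / y) (n + 1)]; ring
    have drop_last_sq : ∑ j ∈ range (n + 1), 1 / ((j : ℝ) + x) ^ 2 =
        ∑ j ∈ range (n + 1 + 1), 1 / ((j : ℝ) + x) ^ 2 - 1 / (n + 1 + x) ^ 2 := by
      rw [sum_range_succ _ (n + 1)]; push_cast; ring
    have drop_first_sq : ∑ j ∈ range (n + 1), 1 / ((j : ℝ) + (x + 1)) ^ 2 =
        ∑ j ∈ range (n + 1 + 1), 1 / ((j : ℝ) + x) ^ 2 - 1 / x ^ 2 := by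
      rw [sum_range_succ_natCast_add' (fun y => 1 / y ^ 2) (n + 1)]; ring
    rw [sum_range_choose_succ_mul_neg_one_pow (fun y => 1 / y ^ 3), ih hx, ih hx1,
      drop_last, drop_first, drop_last_sq, drop_first_sq, betaSucc_succ hc, betaSucc_add_one hx0 hc]
    -- With `A`, `B` the two sums over `range (n + 2)` and `c = n + 1 + x`:
    -- `(A - 1/c)² + (B - 1/c²) = A² + B - 2A/c`, and likewise with `x` for `c`,
    -- so the terms linear in `A` cancel and only a multiple of `A² + B` survives.
    field_simp
    ring

theorem coppo_formula_two (n : ℕ) (x : ℝ) (hx : 0 < x) :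
    ∑ k ∈ Finset.range (n + 1), (n.choose k : ℝ) * (-1) ^ k / ((k : ℝ) + x) ^ 3 =
      (n.factorial : ℝ) * Real.Gamma x / Real.Gamma ((n : ℝ) + 1 + x) * (1 / 2) *
        ((∑ j ∈ Finset.range (n + 1), 1 / ((j : ℝ) + x)) ^ 2 +
          ∑ j ∈ Finset.range (n + 1), 1 / ((j : ℝ) + x) ^ 2) :=
  sum_choose_mul_neg_one_pow_div_add_pow_three n fun m =>
    ((neg_nonpos.2 m.cast_nonneg).trans_lt hx).ne'
end

section
/- For integers n ≥ 1 and r ≥ 0, the Stirling numbers of the first kind satisfy the recurrence (r+1)·s(n, r+2) = -∑_{k=0}^r s(n, r-k+1)·H_{n-1}^{(k+1)}. -/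
/-- The signed Stirling numbers of the first kind, defined as the coefficients of the
falling factorial `x(x-1)⋯(x-n+1) = ∑_{k=0}^n s(n,k) x^k`. -/
noncomputable def stirlingFirst (n k : ℕ) : ℤ := (descPochhammer ℤ n).coeff k

/-!
For `n = m + 1` the numbers `s(n, k + 1)` are the coefficients of `Q(x) = ∏_{j=1}^{m} (x - j)`.
Expanding each `1 / (x - j) = -∑_k x^k / j^(k+1)` as a power series at `0`, the logarithmic
derivative gives `Q' = Q · ∑_j 1 / (x - j) = -Q · ∑_k H_m^{(k+1)} x^k`, and the recurrence is the
comparison of the coefficients of `x^r` on both sides.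
-/

open Finset PowerSeries

namespace PowerSeries

variable {R : Type*} [CommRing R]

theorem derivative_X_sub_C_eq_mul_neg_invUnitsSub (u : Rˣ) :
    d⁄dX R (X - C (u : R)) = (X - C (u : R)) * -invUnitsSub u := by
  rw [mul_neg, ← neg_mul, neg_sub, mul_comm, invUnitsSub_mul_sub]
  simp

theorem derivative_prod_X_sub_C {ι : Type*} (s : Finset ι) (u : ι → Rˣ) :
    d⁄dX R (∏ i ∈ s, (X - C (u i : R))) =
      (∏ i ∈ s, (X - C (u i : R))) * -∑ i ∈ s, invUnitsSub (u i) := by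
  classical
  induction s using Finset.induction_on with
  | empty => simp
  | insert a s ha ih =>
    rw [prod_insert ha, sum_insert ha, Derivation.leibniz, ih,
      derivative_X_sub_C_eq_mul_neg_invUnitsSub, smul_eq_mul, smul_eq_mul]
    ring

end PowerSeries

theorem descPochhammer_succ_eq_X_mul_prod (R : Type*) [CommRing R] (m : ℕ) :
    descPochhammer R (m + 1) =
      Polynomial.X * ∏ j ∈ range m, (Polynomial.X - Polynomial.C ((j : R) + 1)) := by
  induction m with
  | zero => simp
  | succ m ih =>
    rw [descPochhammer_succ_right, ih, prod_range_succ]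
    simp [mul_assoc]

theorem coeff_descPochhammer_succ_succ (R : Type*) [CommRing R] (m k : ℕ) :
    (descPochhammer R (m + 1)).coeff (k + 1) =
      coeff k (∏ j ∈ range m, (X - C ((j : R) + 1)) : R⟦X⟧) := by
  rw [descPochhammer_succ_eq_X_mul_prod, Polynomial.coeff_X_mul, ← Polynomial.coeff_coe,
    ← Polynomial.coeToPowerSeries.ringHom_apply, map_prod]
  simp only [map_sub, Polynomial.coeToPowerSeries.ringHom_apply, Polynomial.coe_X,
    Polynomial.coe_C]

noncomputable def natSuccUnit (j : ℕ) : ℝˣ := Units.mk0 ((j : ℝ) + 1) j.cast_add_one_ne_zero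

theorem stirlingFirst_succ_succ_eq_coeff (m k : ℕ) :
    (stirlingFirst (m + 1) (k + 1) : ℝ) =
      coeff k (∏ j ∈ range m, (X - C (natSuccUnit j : ℝ))) := by
  rw [stirlingFirst, ← eq_intCast (Int.castRingHom ℝ), ← Polynomial.coeff_map,
    descPochhammer_map, coeff_descPochhammer_succ_succ]
  rfl

theorem coeff_sum_invUnitsSub_natSuccUnit (m k : ℕ) :
    coeff k (∑ j ∈ range m, invUnitsSub (natSuccUnit j)) = genHarmonic (k + 1) m := by
  simp [genHarmonic, natSuccUnit, coeff_invUnitsSub, map_sum]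

theorem stirlingFirst_recurrence (n r : ℕ) (hn : 1 ≤ n) :
    ((r : ℝ) + 1) * (stirlingFirst n (r + 2) : ℝ) =
      -∑ k ∈ Finset.range (r + 1),
        (stirlingFirst n (r - k + 1) : ℝ) * genHarmonic (k + 1) (n - 1) := by
  obtain ⟨m, rfl⟩ : ∃ m, n = m + 1 := ⟨n - 1, by omega⟩
  have hlog := congrArg (coeff r)
    ((derivative_prod_X_sub_C (range m) natSuccUnit).trans (mul_comm _ _))
  rw [coeff_derivative, coeff_mul, Finset.Nat.sum_antidiagonal_eq_sum_range_succ
    (fun i j => coeff i _ * coeff j _)] at hlog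
  simp only [map_neg, coeff_sum_invUnitsSub_natSuccUnit, ← stirlingFirst_succ_succ_eq_coeff,
    neg_mul, sum_neg_distrib, mul_comm (genHarmonic _ _)] at hlog
  rw [Nat.add_sub_cancel, mul_comm, hlog]
end

section
/- For all positive integers n and r, (-1)^{r+1} n ∫_0^1 (1-t)^{n-1} log^r t dt = r! ∑_{k=1}^n C(n,k) (-1)^k / k^r. -/
/-!
Expand `(1 - t)^(n-1)` by the binomial theorem. Each moment `∫₀¹ t^j log^r t dt` becomes a Gamma
integral under `t = e^{-u}`, namely `(-1)^r r! / (j+1)^(r+1)`, and `n C(n-1, j) = (j+1) C(n, j+1)`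
turns the resulting sum into the one on the right, with `k = j + 1`.
-/

open MeasureTheory Set Real

section ExpNegSubstitution

variable {E : Type*} [NormedAddCommGroup E] [NormedSpace ℝ E]

lemma image_exp_neg_Ioi : (fun u : ℝ => exp (-u)) '' Ioi 0 = Ioo 0 1 := by
  ext t
  constructor
  · rintro ⟨u, hu, rfl⟩
    exact ⟨exp_pos _, exp_lt_one_iff.mpr (neg_neg_of_pos hu)⟩
  · rintro ⟨ht0, ht1⟩
    exact ⟨-log t, neg_pos.mpr (log_neg ht0 ht1), by simp [exp_log ht0]⟩

lemma hasDerivWithinAt_exp_neg (s : Set ℝ) (u : ℝ) :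
    HasDerivWithinAt (fun u : ℝ => exp (-u)) (-exp (-u)) s u := by
  simpa using ((hasDerivAt_neg u).exp).hasDerivWithinAt

lemma injOn_exp_neg (s : Set ℝ) : InjOn (fun u : ℝ => exp (-u)) s :=
  fun _ _ _ _ h => neg_injective (exp_injective h)

theorem integrableOn_Ioo_zero_one_iff_exp_neg_smul {f : ℝ → E} :
    IntegrableOn f (Ioo 0 1) ↔ IntegrableOn (fun u => exp (-u) • f (exp (-u))) (Ioi 0) := by
  rw [← image_exp_neg_Ioi, integrableOn_image_iff_integrableOn_abs_deriv_smul measurableSet_Ioi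
    (fun u _ => hasDerivWithinAt_exp_neg _ u) (injOn_exp_neg _)]
  simp only [abs_neg, abs_of_pos (exp_pos _)]

theorem integral_Ioo_zero_one_eq_integral_exp_neg_smul [CompleteSpace E] (f : ℝ → E) :
    ∫ t in Ioo 0 1, f t = ∫ u in Ioi 0, exp (-u) • f (exp (-u)) := by
  rw [← image_exp_neg_Ioi, integral_image_eq_integral_abs_deriv_smul measurableSet_Ioi
    (fun u _ => hasDerivWithinAt_exp_neg _ u) (injOn_exp_neg _)]
  simp only [abs_neg, abs_of_pos (exp_pos _)]

end ExpNegSubstitution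

section LogPowMoments

variable {s : ℝ} (r : ℕ)

lemma exp_neg_mul_rpow_mul_log_pow (u : ℝ) :
    exp (-u) * (exp (-u) ^ s * log (exp (-u)) ^ r) =
      (-1) ^ r * (u ^ r * exp (-((s + 1) * u))) := by
  rw [log_exp, ← exp_mul, neg_pow, show -((s + 1) * u) = -u + -u * s by ring, exp_add]
  ring

theorem integrableOn_rpow_mul_log_pow (hs : -1 < s) :
    IntegrableOn (fun t => t ^ s * log t ^ r) (Ioo 0 1) := by
  rw [integrableOn_Ioo_zero_one_iff_exp_neg_smul]
  simp only [smul_eq_mul, exp_neg_mul_rpow_mul_log_pow]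
  have := integrableOn_rpow_mul_exp_neg_mul_rpow (s := r) (p := 1) (b := s + 1)
    (neg_one_lt_zero.trans_le r.cast_nonneg) one_pos (by linarith)
  simp only [rpow_natCast, rpow_one, neg_mul] at this
  exact this.const_mul _

theorem integral_rpow_mul_log_pow (hs : -1 < s) :
    ∫ t in Ioo 0 1, t ^ s * log t ^ r = (-1) ^ r * r.factorial / (s + 1) ^ (r + 1) := by
  rw [integral_Ioo_zero_one_eq_integral_exp_neg_smul]
  simp only [smul_eq_mul, exp_neg_mul_rpow_mul_log_pow]
  have := integral_rpow_mul_exp_neg_mul_Ioi (a := r + 1) (r := s + 1) (by positivity)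
    (by linarith)
  rw [add_sub_cancel_right, Gamma_nat_eq_factorial, ← Nat.cast_succ] at this
  simp only [rpow_natCast] at this
  rw [integral_const_mul, this, Nat.succ_eq_add_one, one_div_pow, one_div_mul_eq_div, mul_div_assoc]

theorem integrableOn_pow_mul_log_pow (j : ℕ) :
    IntegrableOn (fun t : ℝ => t ^ j * log t ^ r) (Ioo 0 1) := by
  simpa using integrableOn_rpow_mul_log_pow (s := j) r (neg_one_lt_zero.trans_le j.cast_nonneg)

theorem integral_pow_mul_log_pow (j : ℕ) :
    ∫ t in Ioo 0 1, t ^ j * log t ^ r = (-1) ^ r * r.factorial / (j + 1) ^ (r + 1) := by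
  simpa using integral_rpow_mul_log_pow (s := j) r (neg_one_lt_zero.trans_le j.cast_nonneg)

end LogPowMoments

theorem integral_one_sub_pow_mul_log_pow (n r : ℕ) :
    ∫ t in (0 : ℝ)..1, (1 - t) ^ n * log t ^ r =
      (-1) ^ r * r.factorial *
        ∑ j ∈ Finset.range (n + 1), (-1) ^ j * n.choose j / ((j : ℝ) + 1) ^ (r + 1) := by
  have expand (t : ℝ) : (1 - t) ^ n * log t ^ r =
      ∑ j ∈ Finset.range (n + 1), (-1) ^ j * n.choose j * (t ^ j * log t ^ r) := by
    rw [sub_eq_neg_add, add_pow, Finset.sum_mul]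
    refine Finset.sum_congr rfl fun j _ => ?_
    rw [neg_pow, one_pow]
    ring
  rw [intervalIntegral.integral_of_le zero_le_one, integral_Ioc_eq_integral_Ioo]
  simp_rw [expand]
  rw [integral_finsetSum _ fun j _ => (integrableOn_pow_mul_log_pow r j).const_mul _]
  simp_rw [integral_const_mul, integral_pow_mul_log_pow, Finset.mul_sum]
  refine Finset.sum_congr rfl fun j _ => ?_
  ring

theorem add_one_mul_sum_range_choose_div_pow (n r : ℕ) :
    (n + 1 : ℝ) * ∑ j ∈ Finset.range (n + 1), (-1) ^ j * n.choose j / ((j : ℝ) + 1) ^ (r + 1) =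
      -∑ k ∈ Finset.Icc 1 (n + 1), ((n + 1).choose k : ℝ) * (-1) ^ k / (k : ℝ) ^ r := by
  rw [← Finset.Ico_add_one_right_eq_Icc, Finset.sum_Ico_eq_sum_range, Nat.add_sub_cancel,
    Finset.mul_sum, ← Finset.sum_neg_distrib]
  refine Finset.sum_congr rfl fun j _ => ?_
  have hchoose : (n + 1 : ℝ) * n.choose j = (n + 1).choose (j + 1) * (j + 1) := by
    exact_mod_cast Nat.add_one_mul_choose_eq n j
  rw [add_comm 1 j]
  push_cast
  field_simp
  rw [pow_succ, pow_succ]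
  linear_combination (-1) ^ j * ((j : ℝ) + 1) ^ r * hchoose

theorem integral_log_pow_binomial_general (n r : ℕ) :
    (-1 : ℝ) ^ (r + 1) * (n : ℝ) * ∫ t in (0:ℝ)..1, (1 - t) ^ (n - 1) * (Real.log t) ^ r =
      (r.factorial : ℝ) * ∑ k ∈ Finset.Icc 1 n, (n.choose k : ℝ) * (-1) ^ k / (k : ℝ) ^ r := by
  rcases n with _ | n
  · simp
  have hsign : (-1 : ℝ) ^ (r + 1) * (-1) ^ r = -1 := by
    rw [← pow_add, Odd.neg_one_pow ⟨r, by ring⟩]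
  have hsum := add_one_mul_sum_range_choose_div_pow n r
  rw [Nat.add_sub_cancel, integral_one_sub_pow_mul_log_pow, Nat.cast_succ]
  generalize (∑ j ∈ Finset.range (n + 1), _ : ℝ) = S at hsum ⊢
  linear_combination (r.factorial * ((n : ℝ) + 1) * S) * hsign - r.factorial * hsum

theorem integral_log_pow_binomial (n r : ℕ) (hn : 0 < n) (hr : 0 < r) :
    (-1 : ℝ) ^ (r + 1) * (n : ℝ) * ∫ t in (0:ℝ)..1, (1 - t) ^ (n - 1) * (Real.log t) ^ r =
      (r.factorial : ℝ) * ∑ k ∈ Finset.Icc 1 n, (n.choose k : ℝ) * (-1) ^ k / (k : ℝ) ^ r :=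
  integral_log_pow_binomial_general n r
end

section
/- For every positive integer n, (2n)!² / ((2n-1)!(2n+1)!) = ∑_{k=1}^n C(2n, 2k) · 2^{2k} B_{2k} / (2n-2k+1), where B_{2k} are the Bernoulli numbers. -/
/-!
Both sides equal `2n / (2n + 1)`. On the right,
`C(2n, 2k) / (2n - 2k + 1) = C(2n + 1, 2k) / (2n + 1)`, so it suffices that
`∑_{k=1}^n C(2n + 1, 2k) 2^{2k} B_{2k} = 2n`. Expanding the Bernoulli polynomial,
`∑_i C(m, i) 2^i B_i = 2^m B_m(1/2)`, which vanishes for odd `m` by the symmetry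
`B_m(1 - x) = (-1)^m B_m(x)`. For `m = 2n + 1` the odd-index terms reduce to the `B₁` term
`-(2n + 1)` and the `k = 0` term is `1`, which gives the claim.
-/

open Finset

theorem Polynomial.bernoulli_eval_one_half_of_odd {m : ℕ} (hm : Odd m) :
    (Polynomial.bernoulli m).eval (1 / 2 : ℚ) = 0 := by
  have h := bernoulli_eval_one_sub m (1 / 2)
  rw [hm.neg_one_pow] at h
  norm_num at h
  linarith

theorem sum_choose_mul_two_pow_mul_bernoulli (m : ℕ) :
    ∑ i ∈ range (m + 1), (m.choose i : ℚ) * 2 ^ i * bernoulli i =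
      2 ^ m * (Polynomial.bernoulli m).eval (1 / 2) := by
  rw [Polynomial.bernoulli, Polynomial.eval_finsetSum, mul_sum]
  refine sum_congr rfl fun i hi => ?_
  have hi : i ≤ m := Nat.lt_succ_iff.mp (mem_range.mp hi)
  have h2m : (2 : ℚ) ^ m = 2 ^ i * 2 ^ (m - i) := by rw [← pow_add, Nat.add_sub_cancel' hi]
  rw [Polynomial.eval_monomial, h2m, div_pow, one_pow]
  field_simp

theorem sum_range_two_mul_eq_sum_even_add_odd {M : Type*} [AddCommMonoid M] (f : ℕ → M)
    (n : ℕ) :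
    ∑ i ∈ range (2 * n), f i = ∑ k ∈ range n, (f (2 * k) + f (2 * k + 1)) := by
  induction n with
  | zero => simp
  | succ n ih =>
    rw [mul_add, mul_one, sum_range_succ, sum_range_succ, ih, sum_range_succ, add_assoc]

theorem sum_range_succ_eq_sum_Icc {M : Type*} [AddCommMonoid M] (f : ℕ → M) (n : ℕ) :
    ∑ k ∈ range (n + 1), f k = f 0 + ∑ k ∈ Icc 1 n, f k := by
  rw [range_eq_Ico, sum_eq_sum_Ico_succ_bot (Nat.succ_pos n)]
  rfl

theorem sum_Icc_choose_mul_two_pow_mul_bernoulli_even (n : ℕ) :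
    ∑ k ∈ Icc 1 n, ((2 * n + 1).choose (2 * k) : ℚ) * 2 ^ (2 * k) * bernoulli (2 * k) =
      2 * n := by
  have h := sum_choose_mul_two_pow_mul_bernoulli (2 * n + 1)
  rw [Polynomial.bernoulli_eval_one_half_of_odd (odd_two_mul_add_one n), mul_zero,
    show 2 * n + 1 + 1 = 2 * (n + 1) by ring, sum_range_two_mul_eq_sum_even_add_odd,
    sum_add_distrib, sum_range_succ_eq_sum_Icc] at h
  have hodd : ∑ k ∈ range (n + 1),
      ((2 * n + 1).choose (2 * k + 1) : ℚ) * 2 ^ (2 * k + 1) * bernoulli (2 * k + 1) =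
        -(2 * n + 1) := by
    rw [sum_eq_single 0]
    · simp only [mul_zero, zero_add, Nat.choose_one_right, bernoulli_one]
      push_cast
      ring
    · intro k _ hk
      rw [bernoulli_eq_zero_of_odd (odd_two_mul_add_one k) (by omega), mul_zero]
    · simp
  rw [hodd] at h
  simp only [mul_zero, Nat.choose_zero_right, Nat.cast_one, pow_zero, mul_one, bernoulli_zero] at h
  linarith

theorem Nat.cast_choose_div_sub_add_one (K : Type*) [Field K] [CharZero K] {n k : ℕ}
    (hk : k ≤ n) : (n.choose k : K) / (n - k + 1) = (n + 1).choose k / (n + 1) := by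
  have h := Nat.choose_mul_succ_eq n k
  rw [Nat.sub_add_comm hk] at h
  rw [← Nat.cast_sub hk, div_eq_div_iff (Nat.cast_add_one_ne_zero _) (Nat.cast_add_one_ne_zero n)]
  exact_mod_cast h

theorem Nat.cast_factorial_sq_div (K : Type*) [Field K] [CharZero K] {m : ℕ} (hm : 0 < m) :
    (m.factorial : K) ^ 2 / ((m - 1).factorial * (m + 1).factorial) = m / (m + 1) := by
  obtain ⟨m, rfl⟩ : ∃ m', m = m' + 1 := ⟨m - 1, by omega⟩
  have hf : (m.factorial : K) ≠ 0 := Nat.cast_ne_zero.mpr m.factorial_ne_zero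
  simp only [Nat.add_sub_cancel, Nat.factorial_succ]
  push_cast
  field_simp

theorem bernoulli_even_sum (n : ℕ) (hn : 0 < n) :
    ((2 * n).factorial : ℝ) ^ 2 / (((2 * n - 1).factorial : ℝ) * ((2 * n + 1).factorial : ℝ)) =
      ∑ k ∈ Finset.Icc 1 n,
        ((2 * n).choose (2 * k) : ℝ) * 2 ^ (2 * k) * (bernoulli (2 * k) : ℝ) /
          ((2 * n : ℝ) - 2 * k + 1) := by
  have hterm : ∀ k ∈ Icc 1 n,
      ((2 * n).choose (2 * k) : ℝ) * 2 ^ (2 * k) * (bernoulli (2 * k) : ℝ) /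
          ((2 * n : ℝ) - 2 * k + 1) =
        ((2 * n + 1).choose (2 * k) : ℝ) * 2 ^ (2 * k) * (bernoulli (2 * k) : ℝ) /
          (2 * n + 1) := by
    intro k hk
    have hkn := (mem_Icc.mp hk).2
    have h := Nat.cast_choose_div_sub_add_one ℝ (by omega : 2 * k ≤ 2 * n)
    push_cast at h
    calc _ = ((2 * n).choose (2 * k) : ℝ) / (2 * n - 2 * k + 1) *
          (2 ^ (2 * k) * bernoulli (2 * k)) := by ring
      _ = _ := by rw [h]; ring
  have hsum := congrArg (Rat.cast : ℚ → ℝ) (sum_Icc_choose_mul_two_pow_mul_bernoulli_even n)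
  push_cast at hsum
  rw [sum_congr rfl hterm, ← sum_div, hsum, Nat.cast_factorial_sq_div ℝ (by omega : 0 < 2 * n)]
  norm_num
end
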